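/- Let f : M → M be a C¹ map of a compact Riemannian manifold M with Lebesgue (volume) measure Leb, eventually volume expanding with constant λ > 0, and let h(x) = min{n > 0 : |det Df^n(x)| ≥ e^{λn}}, Γ_n = {x : h(x) ≥ n}. If there exist constants C, α > 0 and 0 < τ ≤ 1 such that Leb(Γ_n) ≤ C·e^{−α n^τ} for every n ≥ 1, then there exists β > 0 such that for Lebesgue almost every x ∈ M there is C_x > 0 with |det Df^n(y)| > C_x · e^{β n^τ} for every n ≥ 1 and every y ∈ f^{−n}(x). -/

import Mathlib

/-!
Following a backward orbit `y, f y, …, f^n y = x` greedily, cut off an initial block of length `m`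
with `|det Df^m| ≥ e^{λm}` as long as the current point has `h ≤` the remaining time. This leaves
a tail point `z = f^k y` with `f^{n-k} z = x` and `z ∈ Γ_{n-k+1}`, and
`|det Df^n(y)| ≥ e^{λk} |det Df^{n-k}(z)|`. So it suffices to bound the Jacobian of `f^r` on the
points of `Γ_{r+1} ∩ f^{-r}(x)`. By the area formula, the image under `f^r` of the points of
`Γ_{r+1}` where `|det Df^r| < e^{β r^τ}` has measure at most `e^{β r^τ} Leb(Γ_{r+1})`, which is
summable for `β < α`; by Borel–Cantelli a.e. `x` lies in only finitely many of these images.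
The finitely many remaining times are handled by compactness of `M ∩ f^{-r}(x)` and Sard's lemma,
and subadditivity of `t ↦ t^τ` turns `e^{λk} e^{β (n-k)^τ}` into `e^{β n^τ}`.
-/

open MeasureTheory Set Filter Function Real ENNReal

/-- `|det Df^n(x)|`: the absolute value of the Jacobian determinant of the `n`-th
iterate of `f` at `x`. -/
noncomputable def absDetIter {d : ℕ}
    (f : EuclideanSpace ℝ (Fin d) → EuclideanSpace ℝ (Fin d)) (n : ℕ)
    (x : EuclideanSpace ℝ (Fin d)) : ℝ :=
  |(fderiv ℝ (f^[n]) x).det|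

/-- `h(x) = min {n > 0 : |det Df^n(x)| ≥ e^{λ n}}`, with value `∞` if no such `n` exists. -/
noncomputable def firstExpTime {d : ℕ}
    (f : EuclideanSpace ℝ (Fin d) → EuclideanSpace ℝ (Fin d)) (lam : ℝ)
    (x : EuclideanSpace ℝ (Fin d)) : ℕ∞ :=
  sInf {N : ℕ∞ | ∃ m : ℕ, (m : ℕ∞) = N ∧ 0 < m ∧ Real.exp (lam * m) ≤ absDetIter f m x}

/-- `Γ_n = {x ∈ M : h(x) ≥ n}`. -/
noncomputable def GammaSet {d : ℕ} (M : Set (EuclideanSpace ℝ (Fin d)))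
    (f : EuclideanSpace ℝ (Fin d) → EuclideanSpace ℝ (Fin d)) (lam : ℝ) (n : ℕ) :
    Set (EuclideanSpace ℝ (Fin d)) :=
  {x ∈ M | (n : ℕ∞) ≤ firstExpTime f lam x}

open Topology

protected theorem ContDiff.iterate {𝕜 E : Type*} [NontriviallyNormedField 𝕜]
    [NormedAddCommGroup E] [NormedSpace 𝕜 E] {n : WithTop ℕ∞} {f : E → E}
    (hf : ContDiff 𝕜 n f) (k : ℕ) : ContDiff 𝕜 n f^[k] := by
  induction k with
  | zero => exact contDiff_id
  | succ k ih => rw [iterate_succ']; exact hf.comp ih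

theorem Nat.cast_rpow_le_self {τ : ℝ} (hτ : 0 < τ) (hτ1 : τ ≤ 1) (m : ℕ) :
    (m : ℝ) ^ τ ≤ m := by
  rcases m.eq_zero_or_pos with rfl | hm
  · simp [zero_rpow hτ.ne']
  · simpa using rpow_le_rpow_of_exponent_le (by exact_mod_cast hm : (1 : ℝ) ≤ m) hτ1

theorem mul_natCast_add_rpow_le {β lam τ : ℝ} (hβ : 0 ≤ β) (hβlam : β ≤ lam) (hτ : 0 < τ)
    (hτ1 : τ ≤ 1) (k r : ℕ) : β * ((k + r : ℕ) : ℝ) ^ τ ≤ lam * k + β * (r : ℝ) ^ τ := by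
  have hsub : ((k + r : ℕ) : ℝ) ^ τ ≤ (k : ℝ) ^ τ + (r : ℝ) ^ τ := by
    push_cast
    exact rpow_add_le_add_rpow k.cast_nonneg r.cast_nonneg hτ.le hτ1
  have hk : β * (k : ℝ) ^ τ ≤ lam * k :=
    mul_le_mul hβlam (Nat.cast_rpow_le_self hτ hτ1 k) (by positivity) (hβ.trans hβlam)
  linarith [mul_le_mul_of_nonneg_left hsub hβ]

theorem summable_exp_neg_mul_rpow {c τ : ℝ} (hc : 0 < c) (hτ : 0 < τ) :
    Summable fun n : ℕ => exp (-c * (n : ℝ) ^ τ) := by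
  -- `n ^ 2 * exp (-c n ^ τ) → 0`, so the terms are eventually below `n ^ (-2)`.
  have hlim := (tendsto_rpow_mul_exp_neg_mul_atTop_nhds_zero (2 / τ) c hc).comp
    ((tendsto_rpow_atTop hτ).comp tendsto_natCast_atTop_atTop)
  refine (summable_nat_rpow.2 (by norm_num : (-2 : ℝ) < -1)).of_norm_bounded_eventually_nat ?_
  filter_upwards [hlim.eventually (eventually_le_nhds one_pos), eventually_gt_atTop 0]
    with n hn hn0
  have hn2 : (0 : ℝ) < (n : ℝ) ^ (2 : ℝ) := by positivity
  rw [comp_apply, comp_apply, ← rpow_mul n.cast_nonneg, mul_div_cancel₀ _ hτ.ne'] at hn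
  rw [norm_of_nonneg (exp_pos _).le, rpow_neg n.cast_nonneg, ← one_div, le_div_iff₀ hn2]
  linarith

theorem tsum_ofReal_exp_mul_ne_top {m : ℕ → ℝ≥0∞} {C α β τ : ℝ}
    (hm : ∀ r : ℕ, m r ≤ ENNReal.ofReal (C * exp (-α * ((r + 1 : ℕ) : ℝ) ^ τ)))
    (hα : 0 ≤ α) (hβα : β < α) (hτ : 0 < τ) :
    ∑' r : ℕ, ENNReal.ofReal (exp (β * (r : ℝ) ^ τ)) * m r ≠ ∞ := by
  have hterm : ∀ r : ℕ, ENNReal.ofReal (exp (β * (r : ℝ) ^ τ)) * m r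
      ≤ ENNReal.ofReal C * ENNReal.ofReal (exp (-(α - β) * (r : ℝ) ^ τ)) := fun r => by
    have hmono : α * (r : ℝ) ^ τ ≤ α * ((r + 1 : ℕ) : ℝ) ^ τ := by
      gcongr
      exact_mod_cast r.le_succ
    calc ENNReal.ofReal (exp (β * (r : ℝ) ^ τ)) * m r
        ≤ ENNReal.ofReal (exp (β * (r : ℝ) ^ τ))
            * ENNReal.ofReal (C * exp (-α * ((r + 1 : ℕ) : ℝ) ^ τ)) := by gcongr; exact hm r
      _ = ENNReal.ofReal C
            * ENNReal.ofReal (exp (β * (r : ℝ) ^ τ - α * ((r + 1 : ℕ) : ℝ) ^ τ)) := by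
        rw [ofReal_mul' (exp_pos _).le, ← mul_assoc, mul_comm (ENNReal.ofReal (exp _)),
          mul_assoc, ← ofReal_mul (exp_pos _).le, ← exp_add, sub_eq_add_neg, neg_mul]
      _ ≤ ENNReal.ofReal C * ENNReal.ofReal (exp (-(α - β) * (r : ℝ) ^ τ)) := by
        gcongr
        linarith
  refine ne_top_of_le_ne_top ?_ (ENNReal.tsum_le_tsum hterm)
  rw [ENNReal.tsum_mul_left, ← ofReal_tsum_of_nonneg (fun _ => (exp_pos _).le)
    (summable_exp_neg_mul_rpow (sub_pos.2 hβα) hτ)]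
  exact mul_ne_top ofReal_ne_top ofReal_ne_top

theorem exists_pos_forall_mul_le_of_eventually {X : Type*} {T : ℕ → Set X} {u : ℕ → X → ℝ}
    {g : ℕ → ℝ} (hg : ∀ r, 0 ≤ g r) (hpos : ∀ r, ∃ c > 0, ∀ z ∈ T r, c ≤ u r z)
    (hev : ∀ᶠ r in atTop, ∀ z ∈ T r, g r ≤ u r z) :
    ∃ c > 0, ∀ r, ∀ z ∈ T r, c * g r ≤ u r z := by
  obtain ⟨N, hN⟩ := eventually_atTop.1 hev
  choose c hc_pos hc using hpos
  have hsmall : ∀ᶠ a in 𝓝 (0 : ℝ), a ≤ 1 ∧ ∀ r ∈ Finset.range N, a * g r ≤ c r := by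
    refine (eventually_le_nhds one_pos).and ((eventually_all_finset _).2 fun r _ => ?_)
    have hlim : Tendsto (fun a : ℝ => a * g r) (𝓝 0) (𝓝 0) :=
      (continuous_id.mul continuous_const).tendsto' 0 0 (zero_mul _)
    exact hlim.eventually (eventually_le_nhds (hc_pos r))
  obtain ⟨a, ⟨ha1, haN⟩, ha_pos⟩ :=
    ((eventually_nhdsWithin_of_eventually_nhds (s := Ioi 0) hsmall).and
      self_mem_nhdsWithin).exists
  refine ⟨a, ha_pos, fun r z hz => ?_⟩
  rcases lt_or_ge r N with hr | hr
  · exact (haN r (Finset.mem_range.2 hr)).trans (hc r z hz)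
  · exact (mul_le_of_le_one_left (hg r) ha1).trans (hN r hr z hz)

section Jacobian

variable {E : Type*} [NormedAddCommGroup E] [NormedSpace ℝ E] [FiniteDimensional ℝ E]
  [MeasurableSpace E] [BorelSpace E] (μ : Measure E) [μ.IsAddHaarMeasure]

theorem addHaar_image_le_mul_of_forall_abs_det_le {g : E → E} (hg : Differentiable ℝ g)
    {s : Set E} {ρ : ℝ} (hρ : ∀ z ∈ s, |(fderiv ℝ g z).det| ≤ ρ) :
    μ (g '' s) ≤ ENNReal.ofReal ρ * μ s := by
  set t := toMeasurable μ s ∩ {z | |(fderiv ℝ g z).det| ≤ ρ}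
  have hdet : Measurable fun z => |(fderiv ℝ g z).det| :=
    (ContinuousLinearMap.continuous_det.measurable.comp (measurable_fderiv ℝ g)).abs
  have ht : MeasurableSet t :=
    (measurableSet_toMeasurable μ s).inter (measurableSet_le hdet measurable_const)
  have hst : s ⊆ t := fun z hz => ⟨subset_toMeasurable μ s hz, hρ z hz⟩
  calc μ (g '' s) ≤ μ (g '' t) := measure_mono (image_mono hst)
    _ ≤ ∫⁻ z in t, ENNReal.ofReal |(fderiv ℝ g z).det| ∂μ :=
      addHaar_image_le_lintegral_abs_det_fderiv μ ht
        fun z _ => (hg z).hasFDerivAt.hasFDerivWithinAt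
    _ ≤ ∫⁻ _ in t, ENNReal.ofReal ρ ∂μ :=
      setLIntegral_mono measurable_const fun z hz => ofReal_le_ofReal hz.2
    _ = ENNReal.ofReal ρ * μ t := setLIntegral_const t _
    _ ≤ ENNReal.ofReal ρ * μ s := by
      grw [measure_mono (inter_subset_left : t ⊆ _), measure_toMeasurable]

theorem ae_eventually_notMem_image_of_abs_det_le {g : ℕ → E → E}
    (hg : ∀ r, Differentiable ℝ (g r)) {s : ℕ → Set E} {ρ : ℕ → ℝ}
    (hρ : ∀ r, ∀ z ∈ s r, |(fderiv ℝ (g r) z).det| ≤ ρ r)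
    (hsum : ∑' r, ENNReal.ofReal (ρ r) * μ (s r) ≠ ∞) :
    ∀ᵐ x ∂μ, ∀ᶠ r in atTop, x ∉ g r '' s r :=
  ae_eventually_notMem <| ne_top_of_le_ne_top hsum <| ENNReal.tsum_le_tsum fun r =>
    addHaar_image_le_mul_of_forall_abs_det_le μ (hg r) (hρ r)

theorem ae_forall_notMem_image_iterate_det_eq_zero {g : E → E} (hg : Differentiable ℝ g) :
    ∀ᵐ x ∂μ, ∀ r : ℕ, x ∉ g^[r] '' {z | (fderiv ℝ g^[r] z).det = 0} :=
  ae_all_iff.2 fun r => measure_eq_zero_iff_ae_notMem.1 <|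
    addHaar_image_eq_zero_of_det_fderivWithin_eq_zero μ
      (fun z _ => (hg.iterate r z).hasFDerivAt.hasFDerivWithinAt) fun _ hz => hz

end Jacobian

section Iterates

variable {d : ℕ} {f : EuclideanSpace ℝ (Fin d) → EuclideanSpace ℝ (Fin d)}

theorem absDetIter_add (hf : Differentiable ℝ f) (a b : ℕ) (x : EuclideanSpace ℝ (Fin d)) :
    absDetIter f (b + a) x = absDetIter f b (f^[a] x) * absDetIter f a x := by
  rw [absDetIter, iterate_add, fderiv_comp x (hf.iterate b _) (hf.iterate a _),
    ContinuousLinearMap.det, ContinuousLinearMap.toLinearMap_comp, LinearMap.det_comp, abs_mul]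
  rfl

theorem continuous_absDetIter (hf : ContDiff ℝ 1 f) (n : ℕ) : Continuous (absDetIter f n) :=
  (ContinuousLinearMap.continuous_det.comp
    ((hf.iterate n).continuous_fderiv one_ne_zero)).abs

theorem exists_exp_mul_absDetIter_le (hf : Differentiable ℝ f) (lam : ℝ) (n : ℕ)
    (y : EuclideanSpace ℝ (Fin d)) :
    ∃ k ≤ n, ((n - k + 1 : ℕ) : ℕ∞) ≤ firstExpTime f lam (f^[k] y) ∧
      exp (lam * k) * absDetIter f (n - k) (f^[k] y) ≤ absDetIter f n y := by
  induction n using Nat.strong_induction_on generalizing y with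
  | _ n ih =>
  by_cases hstop : ((n + 1 : ℕ) : ℕ∞) ≤ firstExpTime f lam y
  · exact ⟨0, n.zero_le, by simpa using hstop, by simp⟩
  rw [not_le, firstExpTime, sInf_lt_iff] at hstop
  obtain ⟨_, ⟨m, rfl, hm0, hm_det⟩, hm_lt⟩ := hstop
  have hmn : m ≤ n := Nat.lt_succ_iff.1 (by exact_mod_cast hm_lt)
  obtain ⟨k, hk, hk_first, hk_det⟩ := ih (n - m) (by omega) (f^[m] y)
  refine ⟨k + m, by omega, ?_, ?_⟩
  · rwa [iterate_add_apply, show n - (k + m) = n - m - k by omega]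
  calc exp (lam * ↑(k + m)) * absDetIter f (n - (k + m)) (f^[k + m] y)
      = exp (lam * k) * absDetIter f (n - m - k) (f^[k] (f^[m] y)) * exp (lam * m) := by
        rw [iterate_add_apply, show n - (k + m) = n - m - k by omega]
        push_cast
        rw [mul_add, exp_add]
        ring
    _ ≤ absDetIter f (n - m) (f^[m] y) * absDetIter f m y := by
        gcongr
        exact abs_nonneg _
    _ = absDetIter f n y := by rw [← absDetIter_add hf, Nat.sub_add_cancel hmn]

theorem exists_pos_le_absDetIter_of_notMem_image {M : Set (EuclideanSpace ℝ (Fin d))}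
    (hM : IsCompact M) (hf : ContDiff ℝ 1 f) {x : EuclideanSpace ℝ (Fin d)} {r : ℕ}
    (hx : x ∉ f^[r] '' {z | (fderiv ℝ (f^[r]) z).det = 0}) :
    ∃ c > 0, ∀ z ∈ M ∩ f^[r] ⁻¹' {x}, c ≤ absDetIter f r z :=
  (hM.inter_right ((isClosed_singleton).preimage (hf.continuous.iterate r))).exists_forall_le'
    (continuous_absDetIter hf r).continuousOn
    fun z hz => abs_pos.2 fun h0 => hx ⟨z, h0, hz.2⟩

variable {M : Set (EuclideanSpace ℝ (Fin d))} {lam β τ : ℝ}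

theorem ae_eventually_exp_mul_rpow_le_absDetIter (hf : Differentiable ℝ f) {C α : ℝ}
    (hGamma : ∀ r : ℕ,
      volume (GammaSet M f lam (r + 1)) ≤ ENNReal.ofReal (C * exp (-α * ((r + 1 : ℕ) : ℝ) ^ τ)))
    (hα : 0 ≤ α) (hβα : β < α) (hτ : 0 < τ) :
    ∀ᵐ x, ∀ᶠ r in atTop, ∀ z ∈ GammaSet M f lam (r + 1) ∩ f^[r] ⁻¹' {x},
      exp (β * (r : ℝ) ^ τ) ≤ absDetIter f r z := by
  have hbad := ae_eventually_notMem_image_of_abs_det_le volume (fun r => hf.iterate r)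
    (s := fun r => GammaSet M f lam (r + 1) ∩ {z | absDetIter f r z < exp (β * (r : ℝ) ^ τ)})
    (fun r z hz => hz.2.le) <| ne_top_of_le_ne_top (tsum_ofReal_exp_mul_ne_top hGamma hα hβα hτ)
      (ENNReal.tsum_le_tsum fun r => by gcongr; exact inter_subset_left)
  filter_upwards [hbad] with x hx
  exact hx.mono fun r hr z hz => not_lt.1 fun hlt => hr ⟨z, ⟨hz.1, hlt⟩, hz.2⟩

theorem mul_exp_rpow_le_absDetIter_of_forall_GammaSet (hf : Differentiable ℝ f)
    (hfM : MapsTo f M M) (hβ : 0 ≤ β) (hβlam : β ≤ lam) (hτ : 0 < τ) (hτ1 : τ ≤ 1) {c : ℝ}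
    (hc : 0 ≤ c) {x : EuclideanSpace ℝ (Fin d)}
    (hx : ∀ r, ∀ z ∈ GammaSet M f lam (r + 1) ∩ f^[r] ⁻¹' {x},
      c * exp (β * (r : ℝ) ^ τ) ≤ absDetIter f r z)
    {n : ℕ} {y : EuclideanSpace ℝ (Fin d)} (hy : y ∈ M) (hyx : f^[n] y = x) :
    c * exp (β * (n : ℝ) ^ τ) ≤ absDetIter f n y := by
  obtain ⟨k, hkn, hk_first, hk_det⟩ := exists_exp_mul_absDetIter_le hf lam n y
  have htail := hx (n - k) (f^[k] y) ⟨⟨hfM.iterate k hy, hk_first⟩,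
    by rw [mem_preimage, ← iterate_add_apply, Nat.sub_add_cancel hkn, hyx, mem_singleton_iff]⟩
  have hexponent := mul_natCast_add_rpow_le hβ hβlam hτ hτ1 k (n - k)
  rw [Nat.add_sub_cancel' hkn] at hexponent
  calc c * exp (β * (n : ℝ) ^ τ)
      ≤ exp (lam * k) * (c * exp (β * ((n - k : ℕ) : ℝ) ^ τ)) := by
        rw [mul_left_comm, ← exp_add]
        gcongr
    _ ≤ exp (lam * k) * absDetIter f (n - k) (f^[k] y) := by gcongr
    _ ≤ absDetIter f n y := hk_det

end Iterates

theorem backward_contraction_stretched_exponential_general {d : ℕ}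
    (M : Set (EuclideanSpace ℝ (Fin d))) (hM : IsCompact M)
    (f : EuclideanSpace ℝ (Fin d) → EuclideanSpace ℝ (Fin d))
    (hf : ContDiff ℝ 1 f) (hfM : MapsTo f M M)
    (lam : ℝ) (hlam : 0 < lam)
    (C α τ : ℝ) (hα : 0 < α) (hτ : 0 < τ) (hτ1 : τ ≤ 1)
    (hGamma : ∀ n : ℕ, 1 ≤ n →
      volume (GammaSet M f lam n) ≤ ENNReal.ofReal (C * Real.exp (-α * (n : ℝ) ^ τ))) :
    ∃ β : ℝ, 0 < β ∧ ∀ᵐ x ∂(volume.restrict M), ∃ Cx : ℝ, 0 < Cx ∧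
      ∀ n : ℕ, 1 ≤ n → ∀ y ∈ M, f^[n] y = x →
        Cx * Real.exp (β * (n : ℝ) ^ τ) < absDetIter f n y := by
  have hfd : Differentiable ℝ f := hf.differentiable one_ne_zero
  set β := min lam (α / 2)
  have hβ : 0 < β := lt_min hlam (half_pos hα)
  refine ⟨β, hβ, ae_restrict_of_ae ?_⟩
  filter_upwards [ae_forall_notMem_image_iterate_det_eq_zero volume hfd,
    ae_eventually_exp_mul_rpow_le_absDetIter hfd (fun r => hGamma (r + 1) (by omega)) hα.le
      ((min_le_right _ _).trans_lt (half_lt_self hα)) hτ] with x hx_crit hx_large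
  obtain ⟨c, hc, hcx⟩ := exists_pos_forall_mul_le_of_eventually (fun r => (exp_pos _).le)
    (fun r => (exists_pos_le_absDetIter_of_notMem_image hM hf (hx_crit r)).imp
      fun _ ⟨hc, hle⟩ => ⟨hc, fun z hz => hle z ⟨hz.1.1, hz.2⟩⟩) hx_large
  refine ⟨c / 2, half_pos hc, fun n _ y hy hyx => ?_⟩
  calc c / 2 * exp (β * (n : ℝ) ^ τ) < c * exp (β * (n : ℝ) ^ τ) := by gcongr; linarith
    _ ≤ absDetIter f n y := mul_exp_rpow_le_absDetIter_of_forall_GammaSet hfd hfM hβ.le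
      (min_le_left _ _) hτ hτ1 hc.le hcx hy hyx

/-- Stretched-exponential case: if `Leb (Γ_n) ≤ C e^{-α n^τ}` then one gets backward
contraction at a stretched-exponential rate `e^{β n^τ}`. -/
theorem backward_contraction_stretched_exponential {d : ℕ}
    (M : Set (EuclideanSpace ℝ (Fin d))) (hM : IsCompact M)
    (f : EuclideanSpace ℝ (Fin d) → EuclideanSpace ℝ (Fin d))
    (hf : ContDiff ℝ 1 f) (hfM : MapsTo f M M)
    (lam : ℝ) (hlam : 0 < lam)
    (h_expanding : ∀ᵐ x ∂(volume.restrict M),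
      ∃ n : ℕ, 1 ≤ n ∧ lam < (1 / n) * Real.log (absDetIter f n x))
    (C α τ : ℝ) (hC : 0 < C) (hα : 0 < α) (hτ : 0 < τ) (hτ1 : τ ≤ 1)
    (hGamma : ∀ n : ℕ, 1 ≤ n →
      volume (GammaSet M f lam n) ≤ ENNReal.ofReal (C * Real.exp (-α * (n : ℝ) ^ τ))) :
    ∃ β : ℝ, 0 < β ∧ ∀ᵐ x ∂(volume.restrict M), ∃ Cx : ℝ, 0 < Cx ∧
      ∀ n : ℕ, 1 ≤ n → ∀ y ∈ M, f^[n] y = x →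
        Cx * Real.exp (β * (n : ℝ) ^ τ) < absDetIter f n y :=
  backward_contraction_stretched_exponential_general M hM f hf hfM lam hlam C α τ hα hτ hτ1 hGamma
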